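/- arXiv:1506.02586 — 2 statements merged into one kernel-verified Lean document; each statement's English description precedes it below -/
import Mathlib

section
/- Let p, q, p', q' be real numbers with q ≠ 0, and let ω be a nonzero infinitesimal hyperreal number. Set dp = p'·ω and dq = q'·ω. Then the hyperreal ratio ((p + dp)/(q + dq) - p/q)/ω is infinitely close to the real number (p'·q - p·q')/q^2. -/
/-! Clearing denominators, the difference quotient is exactly `(p'q - pq') / (q (q + q'ω))`, with no
infinitesimal left in the numerator; since `q + q'ω` is infinitely close to `q ≠ 0`, its standard
part is `(p'q - pq') / q²`. -/

set_option linter.deprecated false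

namespace Hyperreal

theorem IsSt.ne_zero {x : ℝ*} {r : ℝ} (hxr : IsSt x r) (hr : r ≠ 0) : x ≠ 0 := by
  rintro rfl
  exact hr (isSt_real_iff_eq.mp hxr).symm

theorem IsSt.div {x y : ℝ*} {r s : ℝ} (hxr : IsSt x r) (hys : IsSt y s) (hs : s ≠ 0) :
    IsSt (x / y) (r / s) :=
  hxr.map₂ hys (continuousAt_fst.div continuousAt_snd hs)

theorem isSt_add_mul_of_infinitesimal (a b : ℝ) {dx : ℝ*} (hdx : Infinitesimal dx) :
    IsSt (a + b * dx) a := by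
  simpa using (isSt_refl_real a).add ((isSt_refl_real b).mul hdx)

end Hyperreal

theorem div_add_mul_sub_div_div {K : Type*} [Field K] {p q p' q' dx : K} (hq : q ≠ 0)
    (hqdx : q + q' * dx ≠ 0) (hdx : dx ≠ 0) :
    ((p + p' * dx) / (q + q' * dx) - p / q) / dx = (p' * q - p * q') / (q * (q + q' * dx)) := by
  rw [div_sub_div _ _ hqdx hq, div_div, div_eq_div_iff (by positivity) (by positivity)]
  ring

theorem euler_quotient_rule (p q p' q' : ℝ) (hq : q ≠ 0) (ω : Hyperreal)
    (hω : ω ≠ 0) (hinf : ω.Infinitesimal) :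
    Hyperreal.IsSt ((((p : Hyperreal) + p' * ω) / ((q : Hyperreal) + q' * ω) - p / q) / ω)
      ((p' * q - p * q') / q ^ 2) := by
  have hqq : q * q ≠ 0 := mul_ne_zero hq hq
  have hden : Hyperreal.IsSt (q * (q + q' * ω)) (q * q) :=
    (Hyperreal.isSt_refl_real q).mul (Hyperreal.isSt_add_mul_of_infinitesimal q q' hinf)
  rw [div_add_mul_sub_div_div (by exact_mod_cast hq)
    (right_ne_zero_of_mul (hden.ne_zero hqq)) hω, sq]
  exact_mod_cast (Hyperreal.isSt_refl_real (p' * q - p * q')).div hden hqq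
end

section
/- Let f : ℝ → ℝ be twice continuously differentiable and let x be a real number. Then the second difference quotient (f(x + 2h) - 2·f(x + h) + f(x))/h^2 tends to the second derivative (deriv (deriv f)) x as h tends to 0 through nonzero values. -/
/-!
By Taylor's theorem with Peano remainder, `f (x + h) = f x + h f' x + h² / 2 f'' x + r h` with
`r h = o(h²)`. In `f (x + 2h) - 2 f (x + h) + f x` the constant and linear terms cancel and the
quadratic ones leave exactly `h² f'' x`, while `r (2h) - 2 r h` is still `o(h²)`.
-/

open Filter Asymptotics Topology

variable {E : Type*} [NormedAddCommGroup E] [NormedSpace ℝ E]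

theorem taylorWithinEval_univ_two (f : ℝ → E) (x₀ x : ℝ) :
    taylorWithinEval f 2 Set.univ x₀ x =
      f x₀ + (x - x₀) • deriv f x₀ + ((x - x₀) ^ 2 / 2) • deriv (deriv f) x₀ := by
  norm_num [taylor_within_apply, Finset.sum_range_succ, iteratedDerivWithin_univ,
    iteratedDeriv_succ, div_eq_inv_mul]

theorem ContDiff.isLittleO_sub_taylor_two {f : ℝ → E} (hf : ContDiff ℝ 2 f) (x : ℝ) :
    (fun h : ℝ => f (x + h) - f x - h • deriv f x - (h ^ 2 / 2) • deriv (deriv f) x)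
      =o[𝓝 0] fun h => h ^ 2 := by
  have hshift : Tendsto (fun h : ℝ => x + h) (𝓝 0) (𝓝 x) := by
    simpa using (continuous_const_add x).tendsto 0
  have := (taylor_isLittleO_univ (x₀ := x) hf).comp_tendsto hshift
  simp only [Function.comp_def, taylorWithinEval_univ_two, add_sub_cancel_left] at this
  simpa only [sub_sub] using this

theorem Asymptotics.IsLittleO.sub_two_smul_comp_two_mul {r : ℝ → E}
    (hr : r =o[𝓝 0] fun h => h ^ 2) :
    (fun h : ℝ => r (2 * h) - (2 : ℝ) • r h) =o[𝓝 0] fun h => h ^ 2 := by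
  have hdouble : (fun h : ℝ => r (2 * h)) =o[𝓝 0] fun h => h ^ 2 := by
    have h2 : Tendsto (fun h : ℝ => 2 * h) (𝓝 0) (𝓝 0) := by
      simpa using (continuous_const_mul (2 : ℝ)).tendsto 0
    refine (hr.comp_tendsto h2).trans_isBigO ?_
    simpa [Function.comp_def, mul_pow] using
      (isBigO_refl (fun h : ℝ => h ^ 2) _).const_mul_left (2 ^ 2 : ℝ)
  exact hdouble.sub (hr.const_smul_left 2)

theorem ContDiff.tendsto_second_difference_quotient {f : ℝ → E} (hf : ContDiff ℝ 2 f) (x : ℝ) :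
    Tendsto (fun h : ℝ => (h ^ 2)⁻¹ • (f (x + 2 * h) - (2 : ℝ) • f (x + h) + f x))
      (𝓝[≠] 0) (𝓝 (deriv (deriv f) x)) := by
  set r := fun h : ℝ => f (x + h) - f x - h • deriv f x - (h ^ 2 / 2) • deriv (deriv f) x
  have hr : (fun h : ℝ => r (2 * h) - (2 : ℝ) • r h) =o[𝓝 0] fun h => h ^ 2 :=
    (hf.isLittleO_sub_taylor_two x).sub_two_smul_comp_two_mul
  have hsplit : ∀ h : ℝ, h ≠ 0 →
      (h ^ 2)⁻¹ • (f (x + 2 * h) - (2 : ℝ) • f (x + h) + f x) =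
        deriv (deriv f) x + (h ^ 2)⁻¹ • (r (2 * h) - (2 : ℝ) • r h) := by
    intro h hh
    have hexpand : f (x + 2 * h) - (2 : ℝ) • f (x + h) + f x =
        (h ^ 2) • deriv (deriv f) x + (r (2 * h) - (2 : ℝ) • r h) := by
      simp only [r]
      module
    rw [hexpand, smul_add, inv_smul_smul₀ (pow_ne_zero 2 hh)]
  have hlim : Tendsto (fun h : ℝ => deriv (deriv f) x + (h ^ 2)⁻¹ • (r (2 * h) - (2 : ℝ) • r h))
      (𝓝[≠] 0) (𝓝 (deriv (deriv f) x + 0)) :=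
    tendsto_const_nhds.add (hr.tendsto_inv_smul_nhds_zero.mono_left nhdsWithin_le_nhds)
  rw [add_zero] at hlim
  exact hlim.congr' (eventually_nhdsWithin_of_forall fun h hh => (hsplit h hh).symm)

theorem second_difference_quotient_tendsto (f : ℝ → ℝ) (hf : ContDiff ℝ 2 f) (x : ℝ) :
    Filter.Tendsto (fun h : ℝ => (f (x + 2 * h) - 2 * f (x + h) + f x) / h ^ 2)
      (nhdsWithin 0 {0}ᶜ) (nhds (deriv (deriv f) x)) := by
  simpa only [smul_eq_mul, div_eq_inv_mul] using hf.tendsto_second_difference_quotient x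
end
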